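/- Let F be the standard normal CDF. Then ∫_{-∞}^{∞} {1 - F(x)³ - (1-F(x))³} dx = 3/√π. -/

import Mathlib

/-!
Since `F(-x) = 1 - F(x)`, the integrand is `3 F(x) (1 - F(x)) = 3 F(x) F(-x)`. With `φ = F'`
(`normalPDF`), integration by parts gives the explicit primitive
`H(x) = x F(x) F(-x) - φ(x) (F(x) - F(-x)) + F(√2 x) / √π` of `F(x) F(-x)`, the last term
accounting for `2 φ(x)² = √2 φ(√2 x) / √π`. The Mills-type bound `x F(-x) ≤ φ(x)` makes the
first term vanish at `+∞`, so `H` tends to `1/√π` there, and to `0` at `-∞` since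
`H(x) + H(-x) = 1/√π`. A nonnegative derivative of a function with finite limits at `±∞` is
integrable, so `∫ F(x) F(-x) dx = 1/√π`.
-/

open Real MeasureTheory

/-- The standard normal cumulative distribution function. -/
noncomputable def normalCDF (x : ℝ) : ℝ :=
  ∫ t in Set.Iic x, Real.exp (-t^2/2) / Real.sqrt (2*π)

open Filter Set Topology ProbabilityTheory

theorem integrable_of_hasDerivAt_of_nonneg {g g' : ℝ → ℝ} {m n : ℝ}
    (hderiv : ∀ x, HasDerivAt g (g' x) x) (hg' : ∀ x, 0 ≤ g' x)
    (hbot : Tendsto g atBot (𝓝 m)) (htop : Tendsto g atTop (𝓝 n)) : Integrable g' := by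
  have hg'int (a b : ℝ) : IntervalIntegrable g' volume a b :=
    intervalIntegral.intervalIntegrable_deriv_of_nonneg
      (fun x _ ↦ (hderiv x).continuousAt.continuousWithinAt) (fun x _ ↦ hderiv x) (fun x _ ↦ hg' x)
  refine (aecover_Ioc (l := atTop) tendsto_neg_atTop_atBot tendsto_id
    ).integrable_of_integral_tendsto_of_nonneg_ae (n - m)
    (fun x ↦ (hg'int (-x) x).def'.mono_set Ioc_subset_uIoc) (.of_forall hg') ?_
  refine (htop.sub (hbot.comp tendsto_neg_atTop_atBot)).congr' ?_
  filter_upwards [eventually_ge_atTop 0] with x hx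
  rw [id, ← intervalIntegral.integral_of_le (show -x ≤ x by linarith),
    intervalIntegral.integral_eq_sub_of_hasDerivAt (fun y _ ↦ hderiv y) (hg'int _ _)]
  rfl

noncomputable def normalPDF (x : ℝ) : ℝ := exp (-x ^ 2 / 2) / √(2 * π)

lemma normalPDF_eq_gaussianPDFReal : normalPDF = gaussianPDFReal 0 1 := by
  ext x
  simp [normalPDF, gaussianPDFReal, div_eq_inv_mul]

lemma tendsto_normalPDF_cocompact : Tendsto normalPDF (cocompact ℝ) (𝓝 0) := by
  have := (tendsto_rpow_abs_mul_exp_neg_mul_sq_cocompact (a := 1 / 2) (by norm_num) 0).div_const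
    (√(2 * π))
  rw [zero_div] at this
  refine this.congr fun x ↦ ?_
  simp only [Real.rpow_zero, one_mul, normalPDF]
  ring_nf

lemma normalPDF_pos (x : ℝ) : 0 < normalPDF x := by unfold normalPDF; positivity

@[simp]
lemma normalPDF_neg (x : ℝ) : normalPDF (-x) = normalPDF x := by simp [normalPDF]

lemma integrable_normalPDF : Integrable normalPDF :=
  normalPDF_eq_gaussianPDFReal ▸ integrable_gaussianPDFReal 0 1

lemma integral_normalPDF : ∫ x, normalPDF x = 1 :=
  normalPDF_eq_gaussianPDFReal ▸ integral_gaussianPDFReal_eq_one 0 one_ne_zero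

lemma hasDerivAt_normalPDF (x : ℝ) : HasDerivAt normalPDF (-x * normalPDF x) x := by
  have h : HasDerivAt (fun t : ℝ ↦ -t ^ 2 / 2) (-x) x :=
    ((hasDerivAt_pow 2 x).fun_neg.div_const 2).congr_deriv (by push_cast; ring)
  unfold normalPDF
  exact (h.exp.div_const _).congr_deriv (by ring)

lemma continuous_normalPDF : Continuous normalPDF := by
  unfold normalPDF; fun_prop

lemma integrable_mul_normalPDF : Integrable fun x ↦ x * normalPDF x := by
  refine ((integrable_mul_exp_neg_mul_sq (b := 1 / 2) (by norm_num)).div_const (√(2 * π))).congr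
    (.of_forall fun x ↦ ?_)
  simp only [normalPDF]
  ring_nf

lemma integral_Iic_neg_mul_normalPDF (y : ℝ) :
    ∫ t in Iic y, -t * normalPDF t = normalPDF y := by
  simpa using integral_Iic_of_hasDerivAt_of_tendsto' (fun t _ ↦ hasDerivAt_normalPDF t)
    (by simpa using integrable_mul_normalPDF.neg.integrableOn)
    (tendsto_normalPDF_cocompact.mono_left atBot_le_cocompact)

lemma normalCDF_eq_integral (x : ℝ) : normalCDF x = ∫ t in Iic x, normalPDF t := rfl

lemma normalCDF_nonneg (x : ℝ) : 0 ≤ normalCDF x :=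
  setIntegral_nonneg measurableSet_Iic fun t _ ↦ (normalPDF_pos t).le

lemma normalCDF_neg (x : ℝ) : normalCDF (-x) = 1 - normalCDF x := by
  rw [eq_sub_iff_add_eq, normalCDF_eq_integral, normalCDF_eq_integral,
    ← integral_comp_neg_Ioi, ← integral_normalPDF, add_comm]
  simpa using intervalIntegral.integral_Iic_add_Ioi integrable_normalPDF.integrableOn
    integrable_normalPDF.integrableOn

lemma hasDerivAt_normalCDF (x : ℝ) : HasDerivAt normalCDF (normalPDF x) x := by
  have : normalCDF = fun u ↦ normalCDF 0 + ∫ t in (0 : ℝ)..u, normalPDF t := by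
    ext u
    rw [normalCDF_eq_integral, normalCDF_eq_integral,
      ← intervalIntegral.integral_Iic_sub_Iic integrable_normalPDF.integrableOn
        integrable_normalPDF.integrableOn, add_sub_cancel]
  rw [this]
  exact (intervalIntegral.integral_hasDerivAt_right integrable_normalPDF.intervalIntegrable
    (continuous_normalPDF.stronglyMeasurableAtFilter _ _)
    continuous_normalPDF.continuousAt).const_add _

lemma tendsto_normalCDF_atBot : Tendsto normalCDF atBot (𝓝 0) :=
  tendsto_integral_Iic_zero tendsto_id

lemma tendsto_normalCDF_atTop : Tendsto normalCDF atTop (𝓝 1) := by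
  have := (tendsto_normalCDF_atBot.comp tendsto_neg_atTop_atBot).const_sub 1
  simpa [Function.comp_def, normalCDF_neg] using this

lemma mul_normalCDF_neg_le_normalPDF (x : ℝ) : x * normalCDF (-x) ≤ normalPDF x := by
  rw [normalCDF_eq_integral, ← integral_const_mul, ← normalPDF_neg,
    ← integral_Iic_neg_mul_normalPDF]
  refine setIntegral_mono_on (integrable_normalPDF.const_mul x).integrableOn
    (by simpa using integrable_mul_normalPDF.neg.integrableOn) measurableSet_Iic fun t ht ↦ ?_
  exact mul_le_mul_of_nonneg_right (by linarith [mem_Iic.1 ht]) (normalPDF_pos t).le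

lemma tendsto_mul_normalCDF_neg_atTop : Tendsto (fun x ↦ x * normalCDF (-x)) atTop (𝓝 0) := by
  refine squeeze_zero' ?_ ?_ (tendsto_normalPDF_cocompact.mono_left atTop_le_cocompact)
  · filter_upwards [eventually_ge_atTop 0] with x hx
    exact mul_nonneg hx (normalCDF_nonneg _)
  · exact .of_forall mul_normalCDF_neg_le_normalPDF

noncomputable def normalCDFMulNegPrimitive (x : ℝ) : ℝ :=
  x * (normalCDF x * normalCDF (-x)) - normalPDF x * (normalCDF x - normalCDF (-x))
    + normalCDF (√2 * x) / √π

lemma two_mul_normalPDF_sq (x : ℝ) :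
    2 * normalPDF x ^ 2 = √2 * normalPDF (√2 * x) / √π := by
  have hexp : ((2 : ℕ) : ℝ) * (-x ^ 2 / 2) = -(2 * x ^ 2) / 2 := by push_cast; ring
  rw [normalPDF, normalPDF, mul_pow, sq_sqrt zero_le_two, sqrt_mul zero_le_two, div_pow,
    ← exp_nat_mul, hexp, mul_pow, sq_sqrt zero_le_two, sq_sqrt pi_pos.le]
  field_simp
  exact sq_sqrt pi_pos.le

lemma hasDerivAt_normalCDFMulNegPrimitive (x : ℝ) :
    HasDerivAt normalCDFMulNegPrimitive (normalCDF x * normalCDF (-x)) x := by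
  have hF := hasDerivAt_normalCDF x
  have hFneg : HasDerivAt (fun y ↦ normalCDF (-y)) (-normalPDF x) x :=
    ((hasDerivAt_normalCDF (-x)).comp x (hasDerivAt_neg' x)).congr_deriv (by simp)
  have hFsqrt : HasDerivAt (fun y ↦ normalCDF (√2 * y)) (normalPDF (√2 * x) * √2) x :=
    ((hasDerivAt_normalCDF _).comp x ((hasDerivAt_id' x).const_mul √2)).congr_deriv (by simp)
  refine ((((hasDerivAt_id' x).fun_mul (hF.fun_mul hFneg)).fun_sub
    ((hasDerivAt_normalPDF x).fun_mul (hF.fun_sub hFneg))).fun_add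
    (hFsqrt.div_const √π)).congr_deriv ?_
  linear_combination -(two_mul_normalPDF_sq x)

lemma normalCDFMulNegPrimitive_add_neg (x : ℝ) :
    normalCDFMulNegPrimitive x + normalCDFMulNegPrimitive (-x) = 1 / √π := by
  simp only [normalCDFMulNegPrimitive, neg_neg, normalPDF_neg, mul_neg, normalCDF_neg]
  ring

lemma tendsto_normalCDFMulNegPrimitive_atTop :
    Tendsto normalCDFMulNegPrimitive atTop (𝓝 (1 / √π)) := by
  have h₁ : Tendsto (fun x ↦ x * (normalCDF x * normalCDF (-x))) atTop (𝓝 0) := by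
    simpa [mul_left_comm] using tendsto_normalCDF_atTop.mul tendsto_mul_normalCDF_neg_atTop
  have h₂ : Tendsto (fun x ↦ normalPDF x * (normalCDF x - normalCDF (-x))) atTop (𝓝 0) := by
    simpa using (tendsto_normalPDF_cocompact.mono_left atTop_le_cocompact).mul
      (tendsto_normalCDF_atTop.sub (tendsto_normalCDF_atBot.comp tendsto_neg_atTop_atBot))
  have h₃ : Tendsto (fun x ↦ normalCDF (√2 * x) / √π) atTop (𝓝 (1 / √π)) :=
    (tendsto_normalCDF_atTop.comp (tendsto_id.const_mul_atTop (by positivity))).div_const _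
  have := (h₁.sub h₂).add h₃
  rwa [sub_zero, zero_add] at this

lemma tendsto_normalCDFMulNegPrimitive_atBot : Tendsto normalCDFMulNegPrimitive atBot (𝓝 0) := by
  have := (tendsto_normalCDFMulNegPrimitive_atTop.comp tendsto_neg_atBot_atTop).const_sub
    (1 / √π)
  rw [sub_self] at this
  refine this.congr fun x ↦ ?_
  rw [Function.comp_apply, ← normalCDFMulNegPrimitive_add_neg x, add_sub_cancel_right]

lemma integral_normalCDF_mul_normalCDF_neg : ∫ x, normalCDF x * normalCDF (-x) = 1 / √π := by
  simpa using integral_of_hasDerivAt_of_tendsto hasDerivAt_normalCDFMulNegPrimitive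
    (integrable_of_hasDerivAt_of_nonneg hasDerivAt_normalCDFMulNegPrimitive
      (fun x ↦ mul_nonneg (normalCDF_nonneg x) (normalCDF_nonneg (-x)))
      tendsto_normalCDFMulNegPrimitive_atBot tendsto_normalCDFMulNegPrimitive_atTop)
    tendsto_normalCDFMulNegPrimitive_atBot tendsto_normalCDFMulNegPrimitive_atTop

/-- `∫ 1 - F(x)³ - (1-F(x))³ dx = 3/√π`. -/
theorem stmt2 :
    ∫ x : ℝ, (1 - (normalCDF x)^3 - (1 - normalCDF x)^3) = 3 / Real.sqrt π := by
  have hintegrand (x : ℝ) :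
      1 - normalCDF x ^ 3 - (1 - normalCDF x) ^ 3 = 3 * (normalCDF x * normalCDF (-x)) := by
    rw [normalCDF_neg]
    ring
  simp_rw [hintegrand, integral_const_mul, integral_normalCDF_mul_normalCDF_neg, mul_one_div]
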